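/- arXiv:2512.12064 — 8 statements merged into one kernel-verified Lean document; each statement's English description precedes it below -/
import Mathlib

section
/- Let f, g : X → X be commuting functions with g surjective, and let a₁, a₂, b₁, b₂ be nonnegative integers such that the set-valued composition f^{a₁} ∘ g^{-a₂} ∘ f^{b₁} ∘ g^{-b₂} is single-valued at every point. Then for every x, f^{a₁}(g^{-a₂}(f^{b₁}(g^{-b₂}(x)))) = f^{a₁+b₁}(g^{-a₂-b₂}(x)) (as singleton sets). -/
/-- If `f, g` commute, `g` is surjective, and the set-valued composition
`f^{a₁} ∘ g^{-a₂} ∘ f^{b₁} ∘ g^{-b₂}` is single-valued at every point, then it equals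
`f^{a₁+b₁} ∘ g^{-(a₂+b₂)}` (as singleton sets). -/
theorem composition_single_valued {X : Type*} (f g : X → X)
    (hcomm : f ∘ g = g ∘ f) (hg : Function.Surjective g)
    (a₁ a₂ b₁ b₂ : ℕ)
    (hsv : ∀ x : X, ∃ y : X,
      f^[a₁] '' (g^[a₂] ⁻¹' (f^[b₁] '' (g^[b₂] ⁻¹' {x}))) = {y}) :
    ∀ x : X,
      f^[a₁] '' (g^[a₂] ⁻¹' (f^[b₁] '' (g^[b₂] ⁻¹' {x}))) =
        f^[a₁ + b₁] '' (g^[a₂ + b₂] ⁻¹' {x}) := by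
  have hc : Function.Commute f g := funext_iff.mp hcomm
  have hcit : ∀ (m n : ℕ) (z : X), f^[m] (g^[n] z) = g^[n] (f^[m] z) := fun m n z =>
    (hc.iterate_iterate m n) z
  intro x
  obtain ⟨y, hy⟩ := hsv x
  -- RHS ⊆ LHS
  have hsub : f^[a₁ + b₁] '' (g^[a₂ + b₂] ⁻¹' {x}) ⊆
      f^[a₁] '' (g^[a₂] ⁻¹' (f^[b₁] '' (g^[b₂] ⁻¹' {x}))) := by
    rintro _ ⟨z, hz, rfl⟩
    refine ⟨f^[b₁] z, ?_, ?_⟩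
    · refine ⟨g^[a₂] z, ?_, hcit b₁ a₂ z⟩
      simp only [Set.mem_preimage, Set.mem_singleton_iff] at hz ⊢
      rw [← Function.iterate_add_apply, Nat.add_comm b₂ a₂]
      exact hz
    · rw [← Function.iterate_add_apply]
  -- RHS is nonempty
  obtain ⟨z, hz⟩ := (hg.iterate (a₂ + b₂)) x
  have hne : f^[a₁ + b₁] z ∈ f^[a₁ + b₁] '' (g^[a₂ + b₂] ⁻¹' {x}) :=
    ⟨z, by simp [hz], rfl⟩
  rw [hy]
  apply Set.Subset.antisymm
  · intro w hw
    rw [Set.mem_singleton_iff] at hw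
    have hmem := hsub hne
    rw [hy, Set.mem_singleton_iff] at hmem
    rw [hw, ← hmem]
    exact hne
  · intro w hw
    have := hsub hw
    rwa [hy] at this
end

section
/- Let f, g : X → X be cousins, i.e., there is a function φ : X → X and n, m ∈ ℕ (positive) with f = φⁿ and g = φᵐ. Assume φ is surjective. Then there exists a greatest ancestor of f and g: a function ψ₀ with f = ψ₀^{n'}, g = ψ₀^{m'} for some positive integers n', m', such that for every other common ancestor ψ (a function with f = ψⁱ, g = ψʲ for positive i, j) there is L ∈ ℕ with ψ^L = ψ₀. Indeed, ψ₀ = φ^{gcd(n,m)} works. -/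
/-- Right cancellation by a surjective map. -/
lemma comp_cancel_right {X Y Z : Type*} {s : X → Y} (hs : Function.Surjective s)
    {h₁ h₂ : Y → Z} (h : h₁ ∘ s = h₂ ∘ s) : h₁ = h₂ := by
  funext y
  obtain ⟨x, rfl⟩ := hs y
  exact congrFun h x

/-- Natural-number Bézout: there are `a b : ℕ` with `a * n = gcd n m + b * m`. -/
lemma nat_bezout (n m : ℕ) (hn : 0 < n) (hm : 0 < m) :
    ∃ a b : ℕ, 0 < a ∧ a * n = Nat.gcd n m + b * m := by
  have hbez : ((Nat.gcd n m : ℤ)) = n * Nat.gcdA n m + m * Nat.gcdB n m :=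
    Nat.gcd_eq_gcd_ab n m
  set x := Nat.gcdA n m with hx
  set y := Nat.gcdB n m with hy
  set k : ℤ := |x| + 1 with hk
  set A : ℤ := x + k * m with hAdef
  set B : ℤ := k * n - y with hBdef
  have hxabs : -|x| ≤ x := neg_abs_le x
  have hxabs' : (0:ℤ) ≤ |x| := abs_nonneg x
  have hm1 : (1 : ℤ) ≤ (m : ℤ) := by exact_mod_cast hm
  have hn1 : (1 : ℤ) ≤ (n : ℤ) := by exact_mod_cast hn
  have hA : 1 ≤ A := by
    have h1 : (|x| + 1) * 1 ≤ (|x| + 1) * m := by nlinarith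
    simp only [hAdef, hk]
    nlinarith
  have hkey : (n : ℤ) * A = (Nat.gcd n m : ℤ) + (m : ℤ) * B := by
    simp only [hAdef, hBdef]
    rw [hbez]
    ring
  have hd_le : ((Nat.gcd n m : ℤ)) ≤ (n : ℤ) := by
    exact_mod_cast Nat.le_of_dvd hn (Nat.gcd_dvd_left n m)
  have hd_pos : (0:ℤ) < ((Nat.gcd n m : ℤ)) := by
    exact_mod_cast Nat.gcd_pos_of_pos_left m hn
  have hB : 0 ≤ B := by
    nlinarith
  refine ⟨A.toNat, B.toNat, ?_, ?_⟩
  · have : (0:ℤ) < A := by linarith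
    omega
  · have hA' : ((A.toNat : ℤ)) = A := Int.toNat_of_nonneg (by linarith)
    have hB' : ((B.toNat : ℤ)) = B := Int.toNat_of_nonneg hB
    have : ((A.toNat * n : ℕ) : ℤ) = ((Nat.gcd n m + B.toNat * m : ℕ) : ℤ) := by
      push_cast
      rw [hA', hB']
      linarith [hkey]
    exact_mod_cast this

/-- Cousins `f = φⁿ`, `g = φᵐ` (with `φ` surjective) have a greatest ancestor,
namely `φ^{gcd(n,m)}`. -/
theorem exists_greatest_ancestor {X : Type*} (f g φ : X → X)
    (hφ : Function.Surjective φ) (n m : ℕ) (hn : 0 < n) (hm : 0 < m)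
    (hf : f = φ^[n]) (hg : g = φ^[m]) :
    ∃ ψ₀ : X → X,
      (∃ n' m' : ℕ, 0 < n' ∧ 0 < m' ∧ f = ψ₀^[n'] ∧ g = ψ₀^[m']) ∧
      (∀ (ψ : X → X) (i j : ℕ), 0 < i → 0 < j → f = ψ^[i] → g = ψ^[j] →
        ∃ L : ℕ, 0 < L ∧ ψ^[L] = ψ₀) ∧
      ψ₀ = φ^[Nat.gcd n m] := by
  set d := Nat.gcd n m with hd
  have hdpos : 0 < d := Nat.gcd_pos_of_pos_left m hn
  have hdn : d ∣ n := Nat.gcd_dvd_left n m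
  have hdm : d ∣ m := Nat.gcd_dvd_right n m
  obtain ⟨a, b, ha, hab⟩ := nat_bezout n m hn hm
  refine ⟨φ^[d], ⟨n / d, m / d, ?_, ?_, ?_, ?_⟩, ?_, rfl⟩
  · exact Nat.div_pos (Nat.le_of_dvd hn hdn) hdpos
  · exact Nat.div_pos (Nat.le_of_dvd hm hdm) hdpos
  · rw [hf, ← Function.iterate_mul, Nat.mul_div_cancel' hdn]
  · rw [hg, ← Function.iterate_mul, Nat.mul_div_cancel' hdm]
  intro ψ i j hi hj hfψ hgψ
  have hφn : φ^[n] = ψ^[i] := hf.symm.trans hfψ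
  have hφm : φ^[m] = ψ^[j] := hg.symm.trans hgψ
  -- ψ is surjective
  have hψi : Function.Surjective (ψ^[i]) := hφn ▸ hφ.iterate n
  have hψ : Function.Surjective ψ := by
    obtain ⟨i', rfl⟩ := Nat.exists_eq_succ_of_ne_zero hi.ne'
    rw [Function.iterate_succ'] at hψi
    exact Function.Surjective.of_comp hψi
  -- key identity
  have hkey : ψ^[a * i] = φ^[d] ∘ ψ^[b * j] := by
    calc ψ^[a * i] = (ψ^[i])^[a] := by rw [← Function.iterate_mul, Nat.mul_comm]
    _ = (φ^[n])^[a] := by rw [hφn]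
    _ = φ^[a * n] := by rw [← Function.iterate_mul, Nat.mul_comm]
    _ = φ^[d + b * m] := by rw [hab]
    _ = φ^[d] ∘ φ^[b * m] := Function.iterate_add φ d (b * m)
    _ = φ^[d] ∘ (φ^[m])^[b] := by rw [← Function.iterate_mul, Nat.mul_comm]
    _ = φ^[d] ∘ ψ^[b * j] := by rw [hφm, ← Function.iterate_mul, Nat.mul_comm]
  -- periodicity relation
  have hper : ψ^[i * m] = ψ^[j * n] := by
    calc ψ^[i * m] = (ψ^[i])^[m] := by rw [← Function.iterate_mul, Nat.mul_comm]
    _ = (φ^[n])^[m] := by rw [hφn]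
    _ = φ^[n * m] := by rw [← Function.iterate_mul, Nat.mul_comm]
    _ = (φ^[m])^[n] := by rw [← Function.iterate_mul, Nat.mul_comm]
    _ = (ψ^[j])^[n] := by rw [hφm]
    _ = ψ^[j * n] := by rw [← Function.iterate_mul, Nat.mul_comm]
  have cancel : ∀ (p : ℕ) (h₁ h₂ : X → X), h₁ ∘ ψ^[p] = h₂ ∘ ψ^[p] → h₁ = h₂ :=
    fun p h₁ h₂ h => comp_cancel_right (hψ.iterate p) h
  rcases Nat.lt_trichotomy (i * m) (j * n) with hlt | heq | hgt
  · -- ψ^[j*n - i*m] = id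
    have hidt : ψ^[j * n - i * m] = id := by
      apply cancel (i * m)
      rw [← Function.iterate_add, Nat.sub_add_cancel hlt.le, ← hper]
      rfl
    set t := j * n - i * m with ht
    have htpos : 0 < t := by omega
    have hvt : b * j ≤ b * j * t := Nat.le_mul_of_pos_right _ htpos
    have haipos : 0 < a * i := Nat.mul_pos ha hi
    refine ⟨a * i + b * j * t - b * j, by omega, ?_⟩
    apply cancel (b * j)
    rw [← Function.iterate_add, Nat.sub_add_cancel (by omega)]
    calc ψ^[a * i + b * j * t] = ψ^[a * i] ∘ ψ^[b * j * t] := Function.iterate_add ψ _ _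
    _ = ψ^[a * i] ∘ (ψ^[t])^[b * j] := by rw [← Function.iterate_mul, Nat.mul_comm t (b * j)]
    _ = ψ^[a * i] := by rw [hidt]; simp
    _ = φ^[d] ∘ ψ^[b * j] := hkey
  · -- i*m = j*n : direct arithmetic
    have key2 : a * i * n = d * i + b * j * n := by
      calc a * i * n = a * n * i := by ring
      _ = (d + b * m) * i := by rw [hab]
      _ = d * i + b * (i * m) := by ring
      _ = d * i + b * (j * n) := by rw [heq]
      _ = d * i + b * j * n := by ring
    have hle : b * j ≤ a * i := by
      have : b * j * n ≤ a * i * n := by omega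
      exact Nat.le_of_mul_le_mul_right this hn
    have hLn : (a * i - b * j) * n = d * i := by
      rw [Nat.sub_mul]
      omega
    have hLpos : 0 < a * i - b * j := by
      rcases Nat.eq_zero_or_pos (a * i - b * j) with h0 | h
      · rw [h0, Nat.zero_mul] at hLn
        have : 0 < d * i := Nat.mul_pos hdpos hi
        omega
      · exact h
    refine ⟨a * i - b * j, hLpos, ?_⟩
    apply cancel (b * j)
    rw [← Function.iterate_add, Nat.sub_add_cancel hle]
    exact hkey
  · -- ψ^[i*m - j*n] = id
    have hidt : ψ^[i * m - j * n] = id := by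
      apply cancel (j * n)
      rw [← Function.iterate_add, Nat.sub_add_cancel hgt.le, hper]
      rfl
    set t := i * m - j * n with ht
    have htpos : 0 < t := by omega
    have hvt : b * j ≤ b * j * t := Nat.le_mul_of_pos_right _ htpos
    have haipos : 0 < a * i := Nat.mul_pos ha hi
    refine ⟨a * i + b * j * t - b * j, by omega, ?_⟩
    apply cancel (b * j)
    rw [← Function.iterate_add, Nat.sub_add_cancel (by omega)]
    calc ψ^[a * i + b * j * t] = ψ^[a * i] ∘ ψ^[b * j * t] := Function.iterate_add ψ _ _
    _ = ψ^[a * i] ∘ (ψ^[t])^[b * j] := by rw [← Function.iterate_mul, Nat.mul_comm t (b * j)]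
    _ = ψ^[a * i] := by rw [hidt]; simp
    _ = φ^[d] ∘ ψ^[b * j] := hkey
end

section
/- Let f, g : X → X be surjective functions. Then f⁻¹(f(x)) = g⁻¹(g(x)) for all x ∈ X if and only if there exists a bijection h : X → X with f = h ∘ g. If additionally f and g commute, then h can be chosen so that f = h ∘ g = g ∘ h. -/
/-- For surjective `f, g : X → X`: fibers of `f` and `g` coincide iff `f = h ∘ g` for a
bijection `h`; if moreover `f` and `g` commute, `h` can be chosen with
`f = h ∘ g = g ∘ h`. -/
theorem equal_fibers_iff_bijection {X : Type*} (f g : X → X)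
    (hf : Function.Surjective f) (hg : Function.Surjective g) :
    ((∀ x : X, f ⁻¹' {f x} = g ⁻¹' {g x}) ↔
      ∃ h : X → X, Function.Bijective h ∧ f = h ∘ g) ∧
    (f ∘ g = g ∘ f → (∀ x : X, f ⁻¹' {f x} = g ⁻¹' {g x}) →
      ∃ h : X → X, Function.Bijective h ∧ f = h ∘ g ∧ f = g ∘ h) := by
  obtain ⟨s, hs⟩ := hg.hasRightInverse
  have key : ∀ (hfib : ∀ x : X, f ⁻¹' {f x} = g ⁻¹' {g x}),
      Function.Bijective (f ∘ s) ∧ f = (f ∘ s) ∘ g := by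
    intro hfib
    have hiff : ∀ x y : X, f y = f x ↔ g y = g x := by
      intro x y
      constructor
      · intro h
        have := (hfib x).symm ▸ (show y ∈ f ⁻¹' {f x} from h)
        exact this
      · intro h
        have : y ∈ g ⁻¹' {g x} := h
        rw [← hfib x] at this
        exact this
    have hcomp : ∀ x, f (s (g x)) = f x := by
      intro x
      exact (hiff x (s (g x))).mpr (hs (g x))
    constructor
    · constructor
      · intro a b hab
        have : g (s a) = g (s b) := by
          simp only [Function.comp] at hab
          exact ((hiff (s b) (s a)).mp hab)
        rwa [hs a, hs b] at this
      · intro y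
        obtain ⟨x, hx⟩ := hf y
        exact ⟨g x, by simp [Function.comp, hcomp x, hx]⟩
    · funext x
      simp [Function.comp, hcomp x]
  constructor
  · constructor
    · intro hfib
      exact ⟨f ∘ s, (key hfib).1, (key hfib).2⟩
    · rintro ⟨h, hb, rfl⟩ x
      ext y
      simp only [Set.mem_preimage, Set.mem_singleton_iff, Function.comp]
      exact ⟨fun e => hb.1 e, fun e => congrArg h e⟩
  · intro hcom hfib
    refine ⟨f ∘ s, (key hfib).1, (key hfib).2, ?_⟩
    funext x
    have : g (f (s x)) = f (g (s x)) := (congrFun hcom.symm (s x))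
    simp only [Function.comp]
    rw [this, hs x]
end

section
/- Let φ : X → X be surjective and not injective, h : X → X a bijection commuting with φ, and a, b ≥ 0 integers, n, m positive integers. Define F ≻ G for surjective F, G to mean: G⁻¹(G(x)) ⊆ F⁻¹(F(x)) for all x, with strict inclusion for some x. Then hᵃ ∘ φⁿ ≻ hᵇ ∘ φᵐ if and only if n > m. -/
/-- For surjective non-injective `φ`, a bijection `h` commuting with `φ`, `a, b ≥ 0`
and positive `n, m`: `hᵃ ∘ φⁿ ≻ hᵇ ∘ φᵐ` iff `n > m`, where `F ≻ G` means every fiber of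
`G` is contained in the corresponding fiber of `F`, strictly for some point. -/
theorem succ_iff_gt {X : Type*} (φ h : X → X)
    (hφs : Function.Surjective φ) (hφni : ¬ Function.Injective φ)
    (hb : Function.Bijective h) (hcomm : h ∘ φ = φ ∘ h)
    (a b n m : ℕ) (hn : 0 < n) (hm : 0 < m) :
    ((∀ x : X, (h^[b] ∘ φ^[m]) ⁻¹' {(h^[b] ∘ φ^[m]) x} ⊆
        (h^[a] ∘ φ^[n]) ⁻¹' {(h^[a] ∘ φ^[n]) x}) ∧
      (∃ x : X, (h^[b] ∘ φ^[m]) ⁻¹' {(h^[b] ∘ φ^[m]) x} ≠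
        (h^[a] ∘ φ^[n]) ⁻¹' {(h^[a] ∘ φ^[n]) x})) ↔ n > m := by
  have hinj : ∀ k, Function.Injective (h^[k]) := fun k => hb.injective.iterate k
  have hsur : ∀ k, Function.Surjective (φ^[k]) := fun k => hφs.iterate k
  have key : ∀ (k j : ℕ) (x y : X),
      (h^[k] ∘ φ^[j]) y = (h^[k] ∘ φ^[j]) x ↔ φ^[j] y = φ^[j] x := by
    intro k j x y
    constructor
    · intro hxy; exact hinj k hxy
    · intro hxy; simp [Function.comp, hxy]
  obtain ⟨u, v, huv, hneuv⟩ := Function.not_injective_iff.mp hφni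
  constructor
  · rintro ⟨hsub, x0, hne⟩
    by_contra hle
    push_neg at hle
    rcases lt_or_eq_of_le hle with hlt | heq
    · -- n < m : inclusion fails
      obtain ⟨x, hx⟩ := hsur n u
      obtain ⟨y, hy⟩ := hsur n v
      have hmy : φ^[m] y = φ^[m] x := by
        have hmx : ∀ z w, φ^[n] z = w → φ^[m] z = φ^[m - n - 1] (φ w) := by
          intro z w hw
          conv_lhs => rw [show m = (m - n - 1) + 1 + n from by omega]
          rw [Function.iterate_add_apply, Function.iterate_add_apply, hw,
            Function.iterate_one]
        rw [hmx y v hy, hmx x u hx, huv]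
      have := hsub x (by
        simp only [Set.mem_preimage, Set.mem_singleton_iff, key]
        exact hmy)
      simp only [Set.mem_preimage, Set.mem_singleton_iff, key] at this
      rw [hx, hy] at this
      exact hneuv this.symm
    · -- n = m : sets equal
      subst heq
      exact hne (Set.ext fun y => by
        simp only [Set.mem_preimage, Set.mem_singleton_iff, key])
  · intro hgt
    constructor
    · intro x y hy
      simp only [Set.mem_preimage, Set.mem_singleton_iff, key] at hy ⊢
      have : n = (n - m) + m := by omega
      rw [this, Function.iterate_add_apply, Function.iterate_add_apply, hy]
    · obtain ⟨x, hx⟩ := hsur m u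
      obtain ⟨y, hy⟩ := hsur m v
      refine ⟨x, fun heq => ?_⟩
      have hyn : φ^[n] y = φ^[n] x := by
        have hstep : ∀ z w, φ^[m] z = w → φ^[n] z = φ^[n - m - 1] (φ w) := by
          intro z w hw
          conv_lhs => rw [show n = (n - m - 1) + 1 + m from by omega]
          rw [Function.iterate_add_apply, Function.iterate_add_apply, hw,
            Function.iterate_one]
        rw [hstep y v hy, hstep x u hx, huv]
      have : y ∈ (h^[b] ∘ φ^[m]) ⁻¹' {(h^[b] ∘ φ^[m]) x} := by
        rw [heq]
        simp only [Set.mem_preimage, Set.mem_singleton_iff, key]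
        exact hyn
      simp only [Set.mem_preimage, Set.mem_singleton_iff, key] at this
      rw [hx, hy] at this
      exact hneuv this.symm
end

section
/- Let f, g : X → X be commuting surjective functions with f ≠ g, at least one of them not injective. If both set-valued functions f ∘ g⁻¹ and g ∘ f⁻¹ are single-valued (equivalently, f ∘ g⁻¹ is a bijection h with f = h ∘ g), then f and g are kin but are not cousins. -/
/-- Maps `f, g : X → X` are kin if `f = hᵃ ∘ φⁿ` and `g = hᵇ ∘ φᵐ` for some map `φ`,
bijection `h` commuting with `φ`, `a, b ≥ 0` and `n, m ≥ 1`. -/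
def IsKin {X : Type*} (f g : X → X) : Prop :=
  ∃ (φ h : X → X) (a b n m : ℕ), Function.Bijective h ∧ h ∘ φ = φ ∘ h ∧
    0 < n ∧ 0 < m ∧ f = h^[a] ∘ φ^[n] ∧ g = h^[b] ∘ φ^[m]

/-- Maps `f, g : X → X` are cousins if `f = φⁿ`, `g = φᵐ` for some map `φ` and
`n, m ≥ 1`. -/
def AreCousins {X : Type*} (f g : X → X) : Prop :=
  ∃ (φ : X → X) (n m : ℕ), 0 < n ∧ 0 < m ∧ f = φ^[n] ∧ g = φ^[m]

/-- If commuting surjective `f ≠ g`, at least one non-injective, are such that both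
`f ∘ g⁻¹` and `g ∘ f⁻¹` are single-valued, then `f, g` are kin but not cousins. -/
theorem kin_not_cousins {X : Type*} (f g : X → X)
    (hf : Function.Surjective f) (hg : Function.Surjective g)
    (hcomm : f ∘ g = g ∘ f) (hne : f ≠ g)
    (hni : ¬ Function.Injective f ∨ ¬ Function.Injective g)
    (hsv₁ : ∀ x : X, ∃ y : X, f '' (g ⁻¹' {x}) = {y})
    (hsv₂ : ∀ x : X, ∃ y : X, g '' (f ⁻¹' {x}) = {y}) :
    IsKin f g ∧ ¬ AreCousins f g := by
  choose h hh using hsv₁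
  choose h' hh' using hsv₂
  have hfg : ∀ z, f z = h (g z) := by
    intro z
    have hz : f z ∈ f '' (g ⁻¹' {g z}) := ⟨z, rfl, rfl⟩
    rw [hh (g z)] at hz
    simpa using hz
  have hgf : ∀ z, g z = h' (f z) := by
    intro z
    have hz : g z ∈ g '' (f ⁻¹' {f z}) := ⟨z, rfl, rfl⟩
    rw [hh' (f z)] at hz
    simpa using hz
  have hleft : ∀ x, h (h' x) = x := by
    intro x
    obtain ⟨z, rfl⟩ := hf x
    rw [← hgf z, ← hfg z]
  have hright : ∀ x, h' (h x) = x := by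
    intro x
    obtain ⟨z, rfl⟩ := hg x
    rw [← hfg z, ← hgf z]
  have hbij' : Function.Bijective h' :=
    Function.bijective_iff_has_inverse.mpr ⟨h, hleft, hright⟩
  have hbij : Function.Bijective h :=
    Function.bijective_iff_has_inverse.mpr ⟨h', hright, hleft⟩
  have hcomm' : h' ∘ f = f ∘ h' := by
    funext x
    obtain ⟨z, rfl⟩ := hf x
    show h' (f (f z)) = f (h' (f z))
    rw [← hgf z, ← hgf (f z)]
    exact (congrFun hcomm z).symm
  constructor
  · exact ⟨f, h', 0, 1, 1, 1, hbij', hcomm', one_pos, one_pos,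
      by funext z; simp, by funext z; simpa using hgf z⟩
  · rintro ⟨φ, n, m, hn, hm, hfe, hge⟩
    have hφni : ¬ Function.Injective φ := by
      intro hinj
      rcases hni with hni | hni
      · exact hni (hfe ▸ hinj.iterate n)
      · exact hni (hge ▸ hinj.iterate m)
    have hnm : n ≠ m := by rintro rfl; exact hne (hfe.trans hge.symm)
    rcases lt_or_gt_of_ne hnm with hlt | hlt
    · -- n < m : h' = φ^[m-n]
      have key : h' = φ^[m - n] := by
        funext x
        obtain ⟨z, rfl⟩ := hf x
        have : g z = φ^[m - n] (f z) := by
          rw [hge, hfe, ← Function.iterate_add_apply,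
            Nat.sub_add_cancel (le_of_lt hlt)]
        rw [← hgf z, this]
      have hinj : Function.Injective (φ^[m - n]) := key ▸ hbij'.injective
      have hk : m - n = (m - n - 1) + 1 := by omega
      rw [hk, Function.iterate_succ] at hinj
      exact hφni hinj.of_comp
    · -- m < n : h = φ^[n-m]
      have key : h = φ^[n - m] := by
        funext x
        obtain ⟨z, rfl⟩ := hg x
        have : f z = φ^[n - m] (g z) := by
          rw [hge, hfe, ← Function.iterate_add_apply,
            Nat.sub_add_cancel (le_of_lt hlt)]
        rw [← hfg z, this]
      have hinj : Function.Injective (φ^[n - m]) := key ▸ hbij.injective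
      have hk : n - m = (n - m - 1) + 1 := by omega
      rw [hk, Function.iterate_succ] at hinj
      exact hφni hinj.of_comp
end

section
/- In the Euclidean subtraction algorithm on a pair of positive integers (n, m) with n > m, where at each step the larger entry is replaced by the difference of the two entries until the entries are equal, the algorithm terminates in at most n steps; it takes exactly n steps if and only if m = 1 or m = n - 1. -/
/-- One step of the subtraction-based Euclidean algorithm. -/
def eucStep : ℕ × ℕ → ℕ × ℕ := fun p =>
  if p.2 < p.1 then (p.1 - p.2, p.2)
  else if p.1 < p.2 then (p.1, p.2 - p.1)
  else p

lemma eucStep_swap (p : ℕ × ℕ) : eucStep p.swap = (eucStep p).swap := by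
  rcases p with ⟨a, b⟩
  rcases lt_trichotomy a b with h | h | h <;>
    simp [eucStep, h, lt_asymm, not_lt.mpr h.le, lt_irrefl]

lemma eucStep_iterate_swap (k : ℕ) (p : ℕ × ℕ) :
    eucStep^[k] p.swap = (eucStep^[k] p).swap := by
  induction k generalizing p with
  | zero => rfl
  | succ k ih =>
    rw [Function.iterate_succ_apply, Function.iterate_succ_apply,
      eucStep_swap, ih]

lemma eucKey : ∀ s a b : ℕ, a + b ≤ s → 1 ≤ b → b ≤ a →
    ∃ k, k ≤ a - 1 ∧ (eucStep^[k] (a, b)).1 = (eucStep^[k] (a, b)).2 ∧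
      (∀ j < k, (eucStep^[j] (a, b)).1 ≠ (eucStep^[j] (a, b)).2) ∧
      (k = a - 1 ↔ b = 1 ∨ b = a - 1) := by
  intro s
  induction s with
  | zero => intro a b h hb hba; omega
  | succ s ih =>
    intro a b hs hb hba
    rcases eq_or_lt_of_le hba with heq | hlt
    · subst heq
      exact ⟨0, by omega, rfl, by omega, by constructor <;> intro h' <;> omega⟩
    · have hstep : eucStep (b, b) = (b, b) := by simp [eucStep]
      have hstep : eucStep (a, b) = (a - b, b) := by simp [eucStep, hlt]
      have hc : 1 ≤ a - b := by omega
      rcases le_or_gt b (a - b) with hbc | hcb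
      · obtain ⟨k, hk1, hk2, hk3, hk4⟩ := ih (a - b) b (by omega) hb hbc
        refine ⟨k + 1, by omega, ?_, ?_, ?_⟩
        · rw [Function.iterate_succ_apply, hstep]; exact hk2
        · intro j hj
          rcases j with _ | j
          · simpa using (by omega : a ≠ b)
          · rw [Function.iterate_succ_apply, hstep]; exact hk3 j (by omega)
        · constructor
          · intro h'
            left; omega
          · intro h'
            have hb1 : b = 1 := by omega
            have : k = a - b - 1 := hk4.mpr (Or.inl hb1)
            omega
      · obtain ⟨k, hk1, hk2, hk3, hk4⟩ := ih b (a - b) (by omega) hc hcb.le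
        have hsw : ∀ j, eucStep^[j] (a - b, b) = (eucStep^[j] (b, a - b)).swap :=
          fun j => eucStep_iterate_swap j (b, a - b)
        refine ⟨k + 1, by omega, ?_, ?_, ?_⟩
        · rw [Function.iterate_succ_apply, hstep, hsw]
          simpa using hk2.symm
        · intro j hj
          rcases j with _ | j
          · simpa using (by omega : a ≠ b)
          · rw [Function.iterate_succ_apply, hstep, hsw]
            simpa using fun h => hk3 j (by omega) h.symm
        · constructor
          · intro h'
            right; omega
          · intro h'
            have hc1 : a - b = 1 := by omega
            have : k = b - 1 := hk4.mpr (Or.inl hc1)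
            omega

/-- The subtraction Euclidean algorithm on `(n, m)` with `n > m ≥ 1` terminates (first
index `N` with equal entries, where index `i` corresponds to `eucStep^[i-1] (n,m)`) in
at most `n` steps, and in exactly `n` steps iff `m = 1` or `m = n - 1`. -/
theorem euclidean_terminates (n m : ℕ) (hm : 0 < m) (hnm : m < n) :
    ∃ N : ℕ, 1 ≤ N ∧ N ≤ n ∧
      (eucStep^[N - 1] (n, m)).1 = (eucStep^[N - 1] (n, m)).2 ∧
      (∀ K : ℕ, 1 ≤ K → K < N →
        (eucStep^[K - 1] (n, m)).1 ≠ (eucStep^[K - 1] (n, m)).2) ∧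
      (N = n ↔ m = 1 ∨ m = n - 1) := by
  obtain ⟨k, hk1, hk2, hk3, hk4⟩ :=
    eucKey (n + m) n m le_rfl hm hnm.le
  refine ⟨k + 1, by omega, by omega, by simpa using hk2, ?_, ?_⟩
  · intro K hK1 hK2
    simpa using hk3 (K - 1) (by omega)
  · rw [show (k + 1 = n) ↔ (k = n - 1) by omega]
    exact hk4
end

section
/- Let h : [0,1] → [0,1] be a homeomorphism with h² ≠ id. Then for positive integers n, m: (h²ᵐ ≠ h²ⁿ and for every x either x ≤ h²ᵐ(x) ≤ h²ⁿ(x) or h²ⁿ(x) ≤ h²ᵐ(x) ≤ x) holds if and only if n > m. -/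
section aux

variable {α : Type*} [LinearOrder α] {g : α → α}

lemma chain_up (hg : StrictMono g) {x : α} (hx : x < g x) :
    StrictMono (fun k => g^[k] x) := by
  apply strictMono_nat_of_lt_succ
  intro k
  induction k with
  | zero => simpa using hx
  | succ k ih =>
    have := hg ih
    simpa [Function.iterate_succ_apply'] using this

lemma chain_up_le (hg : StrictMono g) {x : α} (hx : x ≤ g x) :
    Monotone (fun k => g^[k] x) := by
  apply monotone_nat_of_le_succ
  intro k
  induction k with
  | zero => simpa using hx
  | succ k ih =>
    have := hg.monotone ih
    simpa [Function.iterate_succ_apply'] using this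

lemma chain_down (hg : StrictMono g) {x : α} (hx : g x < x) :
    StrictAnti (fun k => g^[k] x) := by
  apply strictAnti_nat_of_succ_lt
  intro k
  induction k with
  | zero => simpa using hx
  | succ k ih =>
    have := hg ih
    simpa [Function.iterate_succ_apply'] using this

lemma chain_down_le (hg : StrictMono g) {x : α} (hx : g x ≤ x) :
    Antitone (fun k => g^[k] x) := by
  apply antitone_nat_of_succ_le
  intro k
  induction k with
  | zero => simpa using hx
  | succ k ih =>
    have := hg.monotone ih
    simpa [Function.iterate_succ_apply'] using this

end aux

/-- For a homeomorphism `h` of `[0,1]` with `h² ≠ id` and positive `n, m`: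
`hⁿ ≻ hᵐ` (i.e. `h²ᵐ ≠ h²ⁿ` and for every `x` either `x ≤ h²ᵐ(x) ≤ h²ⁿ(x)` or
`h²ⁿ(x) ≤ h²ᵐ(x) ≤ x`) iff `n > m`. -/
theorem homeo_succ_iff (h : unitInterval ≃ₜ unitInterval)
    (hne : (⇑h) ∘ (⇑h) ≠ id) (n m : ℕ) (hn : 0 < n) (hm : 0 < m) :
    ((⇑h)^[2 * m] ≠ (⇑h)^[2 * n] ∧
      ∀ x : unitInterval,
        (x ≤ (⇑h)^[2 * m] x ∧ (⇑h)^[2 * m] x ≤ (⇑h)^[2 * n] x) ∨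
        ((⇑h)^[2 * n] x ≤ (⇑h)^[2 * m] x ∧ (⇑h)^[2 * m] x ≤ x)) ↔ n > m := by
  haveI : Inhabited unitInterval := ⟨0⟩
  set g : unitInterval → unitInterval := (⇑h)^[2] with hgdef
  have hg : StrictMono g := by
    rcases h.continuous.strictMono_of_inj h.injective with hmono | hanti
    · have : g = (⇑h) ∘ (⇑h) := by
        funext x; simp [hgdef, Function.iterate_succ_apply']
      rw [this]; exact hmono.comp hmono
    · have : g = (⇑h) ∘ (⇑h) := by
        funext x; simp [hgdef, Function.iterate_succ_apply']
      rw [this]; exact hanti.comp hanti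
  have hgid : g ≠ id := by
    intro hgi
    apply hne
    have : (⇑h) ∘ (⇑h) = g := by
      funext x; simp [hgdef, Function.iterate_succ_apply']
    rw [this, hgi]
  obtain ⟨x₀, hx₀⟩ : ∃ x, g x ≠ x := by
    by_contra hc
    push_neg at hc
    exact hgid (funext hc)
  have hiter : ∀ k : ℕ, (⇑h)^[2 * k] = g^[k] := by
    intro k
    rw [hgdef, ← Function.iterate_mul]
  rw [hiter m, hiter n]
  constructor
  · rintro ⟨Hne, Hbet⟩
    rcases lt_trichotomy m n with hlt | heq | hgt
    · exact hlt
    · exact absurd (by rw [heq]) Hne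
    · -- m > n : derive g^[m] = g^[n], contradiction with Hne
      exfalso
      apply Hne
      funext x
      rcases lt_trichotomy x (g x) with hx | hx | hx
      · have hc := chain_up hg hx
        have h1 : x < g^[n] x := by simpa using hc hn
        have h2 : g^[n] x ≤ g^[m] x := (chain_up_le hg hx.le) hgt.le
        rcases Hbet x with ⟨_, hb⟩ | ⟨_, hb⟩
        · exact le_antisymm hb h2
        · exact absurd (lt_of_lt_of_le h1 h2) (not_lt.mpr hb)
      · have : ∀ k, g^[k] x = x := fun k => Function.iterate_fixed hx.symm k
        rw [this m, this n]
      · have hc := chain_down hg hx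
        have h1 : g^[n] x < x := by simpa using hc hn
        have h2 : g^[m] x ≤ g^[n] x := (chain_down_le hg hx.le) hgt.le
        rcases Hbet x with ⟨hb, _⟩ | ⟨hb, _⟩
        · exact absurd (lt_of_le_of_lt h2 h1) (not_lt.mpr hb)
        · exact le_antisymm h2 hb
  · intro hlt
    constructor
    · intro heq
      rcases lt_or_gt_of_ne hx₀ with hx | hx
      · have := (chain_down hg hx) hlt
        simp only at this
        rw [heq] at this
        exact lt_irrefl _ this
      · have := (chain_up hg hx) hlt
        simp only at this
        rw [heq] at this
        exact lt_irrefl _ this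
    · intro x
      rcases le_total x (g x) with hx | hx
      · left
        have hmono := chain_up_le hg hx
        exact ⟨by simpa using hmono (Nat.zero_le m), hmono hlt.le⟩
      · right
        have hmono := chain_down_le hg hx
        exact ⟨hmono hlt.le, by simpa using hmono (Nat.zero_le m)⟩
end

section
/- Let φ : I → I be the map φ(x) = 2x for 0 ≤ x < 1/2 and φ(x) = 3/2 − x for 1/2 ≤ x ≤ 1, and let η : [1/2, 1] → [1/2, 1] be a homeomorphism with η(1/2) = 1/2, η(1) = 1, and η(3/2 − x) = 3/2 − η(x) for all x ∈ [1/2, 1]. Define h : I → I by h(0) = 0 and h(x) = η(2ⁿx)/2ⁿ for x ∈ [1/2^{n+1}, 1/2ⁿ], n ≥ 0. Then h is a well-defined homeomorphism of I that commutes with φ: φ ∘ h = h ∘ φ. -/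
open unitInterval

/-- The interval map `φ(x) = 2x` for `x < 1/2` and `φ(x) = 3/2 − x` for `x ≥ 1/2`. -/
noncomputable def phiMap : unitInterval → unitInterval := fun x =>
  ⟨if (x : ℝ) < 1 / 2 then 2 * (x : ℝ) else 3 / 2 - (x : ℝ), by
    have h0 := x.2.1
    have h1 := x.2.2
    split_ifs with hx
    · exact Set.mem_Icc.mpr ⟨by linarith, by linarith⟩
    · push_neg at hx
      exact Set.mem_Icc.mpr ⟨by linarith, by linarith⟩⟩

namespace CommHomeo

noncomputable def etaR (η : Set.Icc (1/2:ℝ) 1 ≃ₜ Set.Icc (1/2:ℝ) 1) (y : ℝ) : ℝ :=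
  (η (Set.projIcc (1/2) 1 (by norm_num) y) : ℝ)

variable (η : Set.Icc (1/2:ℝ) 1 ≃ₜ Set.Icc (1/2:ℝ) 1)

lemma etaR_continuous : Continuous (etaR η) :=
  continuous_subtype_val.comp (η.continuous.comp continuous_projIcc)

lemma etaR_mem (y : ℝ) : etaR η y ∈ Set.Icc (1/2:ℝ) 1 := (η _).2

lemma etaR_coe {y : ℝ} (hy : y ∈ Set.Icc (1/2:ℝ) 1) : etaR η y = (η ⟨y, hy⟩ : ℝ) := by
  rw [etaR, Set.projIcc_of_mem]

lemma exU (x : ℝ) (hx : 0 < x) : ∃ n : ℕ, 1/2 < 2^n * x := by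
  obtain ⟨n, hn⟩ := pow_unbounded_of_one_lt (1/(2*x)) (by norm_num : (1:ℝ) < 2)
  refine ⟨n, ?_⟩
  rw [div_lt_iff₀ (by positivity)] at hn
  nlinarith

noncomputable def Fm (x : ℝ) : ℝ :=
  if h : 0 < x then etaR η (2 ^ Nat.find (exU x h) * x) / 2 ^ Nat.find (exU x h) else 0

lemma Fm_nonpos {x : ℝ} (hx : ¬ 0 < x) : Fm η x = 0 := dif_neg hx

lemma Fm_pos {x : ℝ} (hx : 0 < x) :
    Fm η x = etaR η (2 ^ Nat.find (exU x hx) * x) / 2 ^ Nat.find (exU x hx) := dif_pos hx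

lemma find_eq {x : ℝ} (hx : 0 < x) {n : ℕ} (h1 : 1/2 < 2^n * x)
    (h2 : ∀ k < n, ¬(1/2 < (2:ℝ)^k * x)) : Nat.find (exU x hx) = n :=
  (Nat.find_eq_iff _).mpr ⟨h1, h2⟩

lemma small_pow {k n : ℕ} (hk : k < n) {x : ℝ} (hx : x ≤ 1/2^n) (hx0 : 0 ≤ x) :
    ¬(1/2 < (2:ℝ)^k * x) := by
  push_neg
  have h1 : (2:ℝ)^(k+1) ≤ 2^n := pow_le_pow_right₀ one_le_two hk
  have h2 : (2:ℝ)^k * x ≤ 2^k * (1/2^n) :=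
    mul_le_mul_of_nonneg_left hx (by positivity)
  have h3 : (2:ℝ)^k * (1/2^n) ≤ 1/2 := by
    rw [mul_one_div, div_le_div_iff₀ (by positivity) (by norm_num)]
    calc (2:ℝ)^k * 2 = 2^(k+1) := (pow_succ 2 k).symm
      _ ≤ 2^n := h1
      _ = 1 * 2^n := (one_mul _).symm
  linarith

variable (hhalf : η ⟨1/2, by norm_num⟩ = ⟨1/2, by norm_num⟩)
    (hone : η ⟨1, by norm_num⟩ = ⟨1, by norm_num⟩)

include hhalf hone in
lemma Fm_spec {n : ℕ} {x : ℝ} (h1 : 1/2^(n+1) ≤ x) (h2 : x ≤ 1/2^n) :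
    Fm η x = etaR η (2^n * x) / 2^n := by
  have hx : 0 < x := lt_of_lt_of_le (by positivity) h1
  rcases eq_or_lt_of_le h1 with heq | hlt
  · -- x = 1/2^(n+1)
    subst heq
    have hfind : Nat.find (exU _ hx) = n + 1 := by
      refine find_eq hx ?_ ?_
      · have : (2:ℝ)^(n+1) * (1/2^(n+1)) = 1 := by field_simp
        rw [this]; norm_num
      · intro k hk
        exact small_pow hk (le_refl _) (by positivity)
    rw [Fm_pos η hx, hfind]
    have e1 : (2:ℝ)^(n+1) * (1/2^(n+1)) = 1 := by field_simp
    have e2 : (2:ℝ)^n * (1/2^(n+1)) = 1/2 := by rw [pow_succ]; field_simp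
    rw [e1, e2, etaR_coe η (by norm_num), etaR_coe η (by norm_num)]
    rw [show (⟨1, by norm_num⟩ : Set.Icc (1/2:ℝ) 1) = ⟨1, by norm_num⟩ from rfl]
    rw [hone, hhalf]
    show (1:ℝ)/2^(n+1) = (1/2)/2^n
    rw [pow_succ]; field_simp
  · -- 1/2^(n+1) < x
    have hfind : Nat.find (exU _ hx) = n := by
      refine find_eq hx ?_ ?_
      · have : (2:ℝ)^n * (1/2^(n+1)) < 2^n * x :=
          mul_lt_mul_of_pos_left hlt (by positivity)
        have e2 : (2:ℝ)^n * (1/2^(n+1)) = 1/2 := by rw [pow_succ]; field_simp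
        linarith [e2 ▸ this]
      · intro k hk
        exact small_pow hk h2 hx.le
    rw [Fm_pos η hx, hfind]

lemma Fm_mem_Icc {x : ℝ} (hx : 0 < x) :
    Fm η x ∈ Set.Icc (1/2^(Nat.find (exU x hx) + 1)) (1/2^(Nat.find (exU x hx))) := by
  rw [Fm_pos η hx]
  set m := Nat.find (exU x hx)
  have h := etaR_mem η (2^m * x)
  constructor
  · rw [pow_succ]
    rw [div_le_div_iff₀ (by positivity) (by positivity)]
    nlinarith [h.1, (by positivity : (0:ℝ) < (2:ℝ)^m)]
  · rw [div_le_div_iff₀ (by positivity) (by positivity)]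
    nlinarith [h.2, (by positivity : (0:ℝ) < (2:ℝ)^m)]

lemma Fm_mem01 (x : ℝ) : Fm η x ∈ Set.Icc (0:ℝ) 1 := by
  by_cases hx : 0 < x
  · have h := Fm_mem_Icc η hx
    constructor
    · exact le_trans (by positivity) h.1
    · exact le_trans h.2 (by
        apply div_le_one_of_le₀ _ (by positivity)
        exact one_le_pow₀ one_le_two)
  · rw [Fm_nonpos η hx]; norm_num

lemma Fm_abs_le (x : ℝ) : |Fm η x| ≤ 2 * |x| := by
  by_cases hx : 0 < x
  · have h := Fm_mem_Icc η hx
    have hfind := Nat.find_spec (exU x hx)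
    set m := Nat.find (exU x hx)
    have h0 : (0:ℝ) ≤ Fm η x := le_trans (by positivity) h.1
    rw [abs_of_nonneg h0, abs_of_pos hx]
    have : (1:ℝ)/2^m < 2 * x := by
      rw [div_lt_iff₀ (by positivity)]
      nlinarith [(by positivity : (0:ℝ) < (2:ℝ)^m)]
    linarith [h.2]
  · rw [Fm_nonpos η hx, abs_zero]
    positivity


lemma Fm_gt_half {x : ℝ} (h1 : 1/2 < x) : Fm η x = etaR η x := by
  have hx : 0 < x := by linarith
  have hfind : Nat.find (exU x hx) = 0 := find_eq hx (by simpa using h1) (by omega)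
  rw [Fm_pos η hx, hfind]
  simp

include hhalf hone in
lemma Fm_continuous : Continuous (Fm η) := by
  rw [continuous_iff_continuousAt]
  intro x0
  rcases lt_trichotomy x0 0 with hneg | hzero | hpos
  · apply continuousAt_const.congr
    filter_upwards [isOpen_Iio.eventually_mem (hneg : x0 ∈ Set.Iio 0)] with x hx
    exact (Fm_nonpos η (not_lt.mpr (le_of_lt hx))).symm
  · subst hzero
    have h0 : Fm η 0 = 0 := Fm_nonpos η (by norm_num)
    rw [ContinuousAt, h0]
    refine squeeze_zero_norm (a := fun x => 2 * |x|) (fun x => ?_) ?_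
    · rw [Real.norm_eq_abs]
      exact Fm_abs_le η x
    · have : Continuous (fun x : ℝ => 2 * |x|) := continuous_const.mul continuous_abs
      simpa using this.tendsto 0
  · by_cases hbig : 1/2 < x0
    · apply ((etaR_continuous η).continuousAt).congr
      filter_upwards [isOpen_Ioi.eventually_mem (hbig : x0 ∈ Set.Ioi (1/2))] with x hx
      exact (Fm_gt_half η hx).symm
    · push_neg at hbig
      have hspec : 1/2 < 2 ^ Nat.find (exU x0 hpos) * x0 := Nat.find_spec (exU x0 hpos)
      obtain ⟨p, hp⟩ : ∃ p, Nat.find (exU x0 hpos) = p + 1 := by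
        rcases Nat.eq_zero_or_pos (Nat.find (exU x0 hpos)) with h | h
        · rw [h] at hspec; simp at hspec; linarith
        · exact ⟨Nat.find (exU x0 hpos) - 1, (Nat.succ_pred_eq_of_pos h).symm⟩
      set m := p + 1 with hmdef
      rw [hp] at hspec
      have hub : x0 ≤ 1/2^m := by
        have hmin := Nat.find_min (exU x0 hpos) (show p < Nat.find (exU x0 hpos) by omega)
        push_neg at hmin
        rw [le_div_iff₀ (by positivity)]
        have : (2:ℝ)^m = 2^p * 2 := pow_succ 2 p
        nlinarith
      have hlb : 1/2^(m+1) < x0 := by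
        rw [div_lt_iff₀ (by positivity)]
        have : (2:ℝ)^(m+1) = 2^m * 2 := pow_succ 2 m
        nlinarith
      have hg : ∀ k : ℕ, Continuous (fun x : ℝ => etaR η (2^k * x) / 2^k) := fun k =>
        Continuous.div_const ((etaR_continuous η).comp (continuous_const.mul continuous_id)) _
      rcases eq_or_lt_of_le hub with heq | hlt
      · -- x0 = 1/2^m : boundary point
        apply continuousAt_iff_continuous_left_right.mpr
        constructor
        · refine ((hg m).continuousWithinAt).congr_of_eventuallyEq ?_ ?_
          · filter_upwards [(isOpen_Ioi.eventually_mem (hlb : x0 ∈ Set.Ioi (1/2^(m+1)))).filter_mono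
              nhdsWithin_le_nhds, eventually_mem_nhdsWithin] with x h1 h2
            exact Fm_spec η hhalf hone (le_of_lt h1) (le_trans h2 hub)
          · exact Fm_spec η hhalf hone (le_of_lt hlb) hub
        · -- right side, uses level p : x0 = 1/2^(p+1)
          have hlt' : x0 < 1/2^p := by
            rw [heq]
            apply div_lt_div_of_pos_left one_pos (by positivity)
            exact pow_lt_pow_right₀ one_lt_two (by omega)
          refine ((hg p).continuousWithinAt).congr_of_eventuallyEq ?_ ?_
          · filter_upwards [(isOpen_Iio.eventually_mem (hlt' : x0 ∈ Set.Iio (1/2^p))).filter_mono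
              nhdsWithin_le_nhds, eventually_mem_nhdsWithin] with x h1 h2
            refine Fm_spec η hhalf hone ?_ (le_of_lt h1)
            calc (1:ℝ)/2^(p+1) = x0 := heq.symm
              _ ≤ x := h2
          · exact Fm_spec η hhalf hone (le_of_eq heq.symm) (le_of_lt hlt')
      · -- interior point
        apply ((hg m).continuousAt).congr
        filter_upwards [isOpen_Ioo.eventually_mem (⟨hlb, hlt⟩ : x0 ∈ Set.Ioo (1/2^(m+1)) (1/2^m))]
          with x hx
        exact (Fm_spec η hhalf hone (le_of_lt hx.1) (le_of_lt hx.2)).symm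


lemma Fm_double {x : ℝ} (hx : 0 < x) (hx2 : x ≤ 1/2) : Fm η (2*x) = 2 * Fm η x := by
  have hspec := Nat.find_spec (exU x hx)
  obtain ⟨p, hp⟩ : ∃ p, Nat.find (exU x hx) = p + 1 := by
    rcases Nat.eq_zero_or_pos (Nat.find (exU x hx)) with h | h
    · rw [h] at hspec; simp at hspec; linarith
    · exact ⟨Nat.find (exU x hx) - 1, (Nat.succ_pred_eq_of_pos h).symm⟩
  have hx2' : (0:ℝ) < 2*x := by linarith
  rw [hp] at hspec
  have hfind2 : Nat.find (exU (2*x) hx2') = p := by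
    refine find_eq hx2' ?_ ?_
    · calc (1:ℝ)/2 < 2^(p+1) * x := hspec
        _ = 2^p * (2*x) := by rw [pow_succ]; ring
    · intro k hk
      have hmin := Nat.find_min (exU x hx) (show k+1 < Nat.find (exU x hx) by omega)
      push_neg at hmin
      push_neg
      calc (2:ℝ)^k * (2*x) = 2^(k+1) * x := by rw [pow_succ]; ring
        _ ≤ 1/2 := hmin
  rw [Fm_pos η hx2', Fm_pos η hx, hfind2, hp]
  have e : (2:ℝ)^p * (2*x) = 2^(p+1) * x := by rw [pow_succ]; ring
  rw [e, pow_succ]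
  field_simp

lemma etaR_sym
    (hsym : ∀ x : Set.Icc (1/2 : ℝ) 1,
      (η ⟨3/2 - (x : ℝ), by
        obtain ⟨x, hx⟩ := x
        rw [Set.mem_Icc] at hx ⊢
        constructor <;> [linarith [hx.2]; linarith [hx.1]]⟩ : ℝ) = 3/2 - (η x : ℝ))
    {x : ℝ} (hx : x ∈ Set.Icc (1/2:ℝ) 1) : etaR η (3/2 - x) = 3/2 - etaR η x := by
  have hmem : 3/2 - x ∈ Set.Icc (1/2:ℝ) 1 := by
    rcases hx with ⟨ha, hb⟩
    constructor <;> [linarith; linarith]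
  rw [etaR_coe η hmem, etaR_coe η hx]
  exact hsym ⟨x, hx⟩

include hhalf in
lemma symm_half : η.symm ⟨1/2, by norm_num⟩ = ⟨1/2, by norm_num⟩ := by
  simpa using (congrArg η.symm hhalf).symm

include hone in
lemma symm_one : η.symm ⟨1, by norm_num⟩ = ⟨1, by norm_num⟩ := by
  simpa using (congrArg η.symm hone).symm

lemma etaR_cancel {y : ℝ} (hy : y ∈ Set.Icc (1/2:ℝ) 1) : etaR η.symm (etaR η y) = y := by
  rw [etaR_coe η hy, etaR_coe η.symm (η ⟨y, hy⟩).2]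
  simp

include hhalf hone in
lemma Fm_leftInv {x : ℝ} (h0 : 0 ≤ x) (h1 : x ≤ 1) : Fm η.symm (Fm η x) = x := by
  rcases eq_or_lt_of_le h0 with rfl | hx
  · rw [Fm_nonpos η (by norm_num), Fm_nonpos η.symm (by norm_num)]
  · have hspec := Nat.find_spec (exU x hx)
    set m := Nat.find (exU x hx) with hm
    have hup : 2^m * x ≤ 1 := by
      rcases Nat.eq_zero_or_pos m with h | h
      · rw [h]; simpa using h1
      · obtain ⟨p, hp⟩ : ∃ p, m = p + 1 :=
          ⟨m - 1, (Nat.succ_pred_eq_of_pos h).symm⟩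
        have hmin := Nat.find_min (exU x hx) (show p < m by omega)
        push_neg at hmin
        rw [hp, pow_succ]
        nlinarith
    have hmemIcc := Fm_mem_Icc η hx
    rw [← hm] at hmemIcc
    have hG := Fm_spec η.symm (symm_half η hhalf) (symm_one η hone)
      (n := m) hmemIcc.1 hmemIcc.2
    rw [hG, Fm_pos η hx, ← hm]
    have e : (2:ℝ)^m * (etaR η (2^m * x)/2^m) = etaR η (2^m*x) := by field_simp
    rw [e, etaR_cancel η ⟨le_of_lt hspec, hup⟩]
    field_simp

include hhalf hone in
lemma Fm_phi
    (hsym : ∀ x : Set.Icc (1/2 : ℝ) 1,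
      (η ⟨3/2 - (x : ℝ), by
        obtain ⟨x, hx⟩ := x
        rw [Set.mem_Icc] at hx ⊢
        constructor <;> [linarith [hx.2]; linarith [hx.1]]⟩ : ℝ) = 3/2 - (η x : ℝ))
    {x : ℝ} (h0 : 0 ≤ x) (h1 : x ≤ 1) :
    (if Fm η x < 1/2 then 2 * Fm η x else 3/2 - Fm η x) =
      Fm η (if x < 1/2 then 2*x else 3/2 - x) := by
  by_cases hxhalf : x < 1/2
  · rw [if_pos hxhalf]
    rcases eq_or_lt_of_le h0 with rfl | hx
    · rw [Fm_nonpos η (by norm_num)]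
      norm_num
      rw [Fm_nonpos η (by norm_num)]
    · have hd : Fm η (2*x) = 2 * Fm η x := Fm_double η hx (by linarith)
      have hle : Fm η x ≤ 1/2 := by
        have hmem := Fm_mem_Icc η hx
        have hspec := Nat.find_spec (exU x hx)
        have hm1 : 1 ≤ Nat.find (exU x hx) := by
          rcases Nat.eq_zero_or_pos (Nat.find (exU x hx)) with h | h
          · rw [h] at hspec; simp at hspec; linarith
          · exact h
        calc Fm η x ≤ 1/2^(Nat.find (exU x hx)) := hmem.2
          _ ≤ 1/2^1 := by
              apply div_le_div_of_nonneg_left one_pos.le (by positivity)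
                (pow_le_pow_right₀ one_le_two hm1) |>.trans_eq rfl
          _ = 1/2 := by norm_num
      rcases lt_or_eq_of_le hle with hlt | heqq
      · rw [if_pos hlt, hd]
      · rw [if_neg (not_lt.mpr (le_of_eq heqq.symm)), hd]
        linarith [heqq]
  · push_neg at hxhalf
    rw [if_neg (not_lt.mpr hxhalf)]
    have hFx : Fm η x = etaR η x := by
      have := Fm_spec η hhalf hone (n := 0) (by norm_num; exact hxhalf) (by norm_num; exact h1)
      simpa using this
    have hmem := etaR_mem η x
    have hmem2 : 3/2 - x ∈ Set.Icc (1/2:ℝ) 1 := by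
      constructor <;> [linarith; linarith]
    have h32 : Fm η (3/2 - x) = etaR η (3/2 - x) := by
      have hb1 : (1:ℝ)/2^(0+1) ≤ 3/2 - x := by norm_num; linarith [hmem2.1]
      have hb2 : (3:ℝ)/2 - x ≤ 1/2^0 := by norm_num; linarith [hmem2.2]
      have := Fm_spec η hhalf hone (n := 0) hb1 hb2
      simpa using this
    rw [hFx, if_neg (not_lt.mpr hmem.1), h32, etaR_sym η hsym ⟨hxhalf, h1⟩]

end CommHomeo

open CommHomeo



/-- Given a homeomorphism `η` of `[1/2, 1]` fixing the endpoints and satisfying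
`η(3/2 − x) = 3/2 − η(x)`, the map `h` with `h(0) = 0` and
`h(x) = η(2ⁿ x)/2ⁿ` on `[1/2ⁿ⁺¹, 1/2ⁿ]` is a well-defined homeomorphism of `[0,1]`
commuting with `φ`. -/

theorem exists_commuting_homeo
    (η : Set.Icc (1/2 : ℝ) 1 ≃ₜ Set.Icc (1/2 : ℝ) 1)
    (hhalf : η ⟨1/2, by norm_num⟩ = ⟨1/2, by norm_num⟩)
    (hone : η ⟨1, by norm_num⟩ = ⟨1, by norm_num⟩)
    (hsym : ∀ x : Set.Icc (1/2 : ℝ) 1,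
      (η ⟨3/2 - (x : ℝ), by
        obtain ⟨x, hx⟩ := x
        rw [Set.mem_Icc] at hx ⊢
        constructor <;> [linarith [hx.2]; linarith [hx.1]]⟩ : ℝ) = 3/2 - (η x : ℝ)) :
    ∃ h : unitInterval ≃ₜ unitInterval,
      h 0 = 0 ∧
      (∀ (n : ℕ) (x : unitInterval)
        (hx : (x : ℝ) ∈ Set.Icc (1 / 2 ^ (n + 1)) (1 / 2 ^ n)),
        (h x : ℝ) = (η ⟨2 ^ n * (x : ℝ), by
          rw [Set.mem_Icc] at hx
          have hp : (0 : ℝ) < 2 ^ n := by positivity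
          rw [Set.mem_Icc]
          constructor
          · have h1 : (2:ℝ) ^ n * (1 / 2 ^ (n + 1)) ≤ 2 ^ n * (x : ℝ) :=
              mul_le_mul_of_nonneg_left hx.1 hp.le
            calc (1:ℝ)/2 = 2 ^ n * (1 / 2 ^ (n + 1)) := by
                  rw [pow_succ]; field_simp
              _ ≤ 2 ^ n * (x : ℝ) := h1
          · calc (2:ℝ) ^ n * (x : ℝ) ≤ 2 ^ n * (1 / 2 ^ n) :=
                  mul_le_mul_of_nonneg_left hx.2 hp.le
              _ = 1 := by field_simp⟩ : ℝ) / 2 ^ n) ∧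
      (∀ x : unitInterval, phiMap (h x) = h (phiMap x)) := by
  
  classical
  have hhalf' := symm_half η hhalf
  have hone' := symm_one η hone
  set e : unitInterval ≃ unitInterval :=
    { toFun := fun x => ⟨Fm η x, Fm_mem01 η x⟩
      invFun := fun x => ⟨Fm η.symm x, Fm_mem01 η.symm x⟩
      left_inv := fun x => Subtype.ext (Fm_leftInv η hhalf hone x.2.1 x.2.2)
      right_inv := fun x => Subtype.ext (by
        have := Fm_leftInv η.symm hhalf' hone' x.2.1 x.2.2
        rwa [Homeomorph.symm_symm] at this) } with he
  have hc : Continuous e :=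
    Continuous.subtype_mk ((Fm_continuous η hhalf hone).comp continuous_subtype_val) _
  refine ⟨hc.homeoOfEquivCompactToT2, ?_, ?_, ?_⟩
  · apply Subtype.ext
    show Fm η ((0 : unitInterval) : ℝ) = 0
    exact Fm_nonpos η (by norm_num)
  · intro n x hx
    show Fm η (x : ℝ) = _
    have hmem : 2 ^ n * (x : ℝ) ∈ Set.Icc (1/2 : ℝ) 1 := by
      have hp : (0:ℝ) < 2 ^ n := by positivity
      have e1 : (2:ℝ)^n * (1/2^(n+1)) = 1/2 := by rw [pow_succ]; field_simp
      have e2 : (2:ℝ)^n * (1/2^n) = 1 := by field_simp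
      constructor
      · calc (1:ℝ)/2 = 2^n * (1/2^(n+1)) := e1.symm
          _ ≤ 2^n * (x:ℝ) := mul_le_mul_of_nonneg_left hx.1 hp.le
      · calc (2:ℝ)^n * (x:ℝ) ≤ 2^n * (1/2^n) := mul_le_mul_of_nonneg_left hx.2 hp.le
          _ = 1 := e2
    rw [Fm_spec η hhalf hone hx.1 hx.2, etaR_coe η hmem]
  · intro x
    apply Subtype.ext
    show (if Fm η (x:ℝ) < 1/2 then 2 * Fm η (x:ℝ) else 3/2 - Fm η (x:ℝ)) =
      Fm η (if (x:ℝ) < 1/2 then 2*(x:ℝ) else 3/2 - (x:ℝ))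
    exact Fm_phi η hhalf hone hsym x.2.1 x.2.2
end
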